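/- Let H be a finite-dimensional involutory Hopf algebra over a field k with a two-sided integral μ ∈ H* and a two-sided cointegral e ∈ H such that μ(e) = 1. Then for every x ∈ H, S(x) = Σ₍ₑ₎ μ(e₍₁₎·x)·e₍₂₎ = Σ₍ₑ₎ μ(e₍₂₎·x)·e₍₁₎. -/

import Mathlib

/-!
If `e` is a right integral in `H` (`e z = ε(z) e`), then `Δ(e)` absorbs `Δ(y)` as the scalar
`ε(y)`, and in Sweedler notation
`e₁ y ⊗ e₂ = e₁ y₁ ⊗ e₂ y₂ S(y₃) = ε(y₁) e₁ ⊗ e₂ S(y₂) = e₁ ⊗ e₂ S(y)`.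
Applying `μ ⊗ id` and using that `μ` is an integral with `μ(e) = 1` gives
`Σ μ(e₁ x) e₂ = μ(e) S(x) = S(x)`. For the other formula apply the same identity to `y = S(x)`,
which turns `e₁ ⊗ e₂ x = e₁ ⊗ e₂ S(S x)` into `e₁ S(x) ⊗ e₂`, and use `id ⊗ μ` instead.
-/

open TensorProduct Coalgebra HopfAlgebra

section Slice

variable {R A M : Type*} [CommSemiring R] [Semiring A] [Algebra R A]
  [AddCommMonoid M] [Module R M]

theorem rTensor_comp_mulRight_apply (φ : A →ₗ[R] M) (x : A) (u : A ⊗[R] A) :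
    LinearMap.rTensor A (φ ∘ₗ LinearMap.mulRight R x) u
      = LinearMap.rTensor A φ (u * (x ⊗ₜ[R] (1 : A))) := by
  induction u using TensorProduct.induction_on with
  | zero => simp
  | tmul a b => simp [Algebra.TensorProduct.tmul_mul_tmul]
  | add u v hu hv => simp [add_mul, hu, hv]

theorem lTensor_comp_mulRight_apply (φ : A →ₗ[R] M) (x : A) (u : A ⊗[R] A) :
    LinearMap.lTensor A (φ ∘ₗ LinearMap.mulRight R x) u
      = LinearMap.lTensor A φ (u * ((1 : A) ⊗ₜ[R] x)) := by
  induction u using TensorProduct.induction_on with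
  | zero => simp
  | tmul a b => simp [Algebra.TensorProduct.tmul_mul_tmul]
  | add u v hu hv => simp [add_mul, hu, hv]

theorem lid_rTensor_mul_one_tmul (φ : Module.Dual R A) (u : A ⊗[R] A) (a : A) :
    TensorProduct.lid R A (LinearMap.rTensor A φ (u * ((1 : A) ⊗ₜ[R] a)))
      = TensorProduct.lid R A (LinearMap.rTensor A φ u) * a := by
  induction u using TensorProduct.induction_on with
  | zero => simp
  | tmul b c => simp [Algebra.TensorProduct.tmul_mul_tmul]
  | add u v hu hv => simp [add_mul, hu, hv]

theorem rid_lTensor_mul_tmul_one (φ : Module.Dual R A) (u : A ⊗[R] A) (a : A) :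
    TensorProduct.rid R A (LinearMap.lTensor A φ (u * (a ⊗ₜ[R] (1 : A))))
      = TensorProduct.rid R A (LinearMap.lTensor A φ u) * a := by
  induction u using TensorProduct.induction_on with
  | zero => simp
  | tmul b c => simp [Algebra.TensorProduct.tmul_mul_tmul]
  | add u v hu hv => simp [add_mul, hu, hv]

end Slice

section Hopf

variable {R A : Type*} [CommSemiring R] [Semiring A] [HopfAlgebra R A]

noncomputable def comulMulAntipode : A ⊗[R] A →ₗ[R] A ⊗[R] A :=
  LinearMap.lTensor A (LinearMap.mul' R A ∘ₗ LinearMap.lTensor A (antipode R)) ∘ₗ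
    (TensorProduct.assoc R A A A).toLinearMap ∘ₗ LinearMap.rTensor A comul

theorem comulMulAntipode_tmul (a b : A) :
    comulMulAntipode (a ⊗ₜ[R] b) = comul a * ((1 : A) ⊗ₜ[R] antipode R b) := by
  simp only [comulMulAntipode, LinearMap.comp_apply, LinearMap.rTensor_tmul,
    LinearEquiv.coe_coe]
  induction comul (R := R) a using TensorProduct.induction_on with
  | zero => simp
  | tmul c d => simp [Algebra.TensorProduct.tmul_mul_tmul]
  | add u v hu hv => simp [TensorProduct.add_tmul, add_mul, hu, hv]

theorem comulMulAntipode_comul (y : A) :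
    comulMulAntipode (comul (R := R) y) = y ⊗ₜ[R] (1 : A) := by
  rw [comulMulAntipode, LinearMap.comp_apply, LinearMap.comp_apply, LinearEquiv.coe_coe,
    coassoc_apply, ← LinearMap.lTensor_comp_apply, LinearMap.comp_assoc, mul_antipode_lTensor_comul,
    LinearMap.lTensor_comp_apply, lTensor_counit_comul]
  simp

theorem comul_mul_tmul_one_eq_comul_mul_one_tmul_antipode {e : A}
    (he : ∀ z : A, e * z = counit (R := R) z • e) (y : A) :
    comul e * (y ⊗ₜ[R] (1 : A)) = comul e * ((1 : A) ⊗ₜ[R] antipode R y) := by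
  have hcomul_e_mul (v : A ⊗[R] A) : comul e * comulMulAntipode v
      = comul e * TensorProduct.map (Algebra.linearMap R A ∘ₗ counit) (antipode R) v := by
    induction v using TensorProduct.induction_on with
    | zero => simp
    | tmul a b =>
      rw [comulMulAntipode_tmul, ← mul_assoc, ← Bialgebra.comul_mul, he, map_smul,
        TensorProduct.map_tmul, LinearMap.comp_apply, Algebra.linearMap_apply,
        Algebra.algebraMap_eq_smul_one, smul_mul_assoc, ← TensorProduct.smul_tmul',
        mul_smul_comm]
    | add u v hu hv => simp only [map_add, mul_add, hu, hv]
  rw [← comulMulAntipode_comul (R := R) y, hcomul_e_mul, ← LinearMap.lTensor_comp_rTensor,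
    LinearMap.comp_apply, LinearMap.rTensor_comp_apply, rTensor_counit_comul]
  simp

end Hopf

theorem antipode_eq_integral_cointegral_formula_general
    {k H : Type*} [Field k] [Ring H] [HopfAlgebra k H]
    (hinv : ∀ x : H, antipode (R := k) (antipode (R := k) x) = x)
    (μ : Module.Dual k H) (e : H)
    (hμ : ∀ x : H,
      TensorProduct.rid k H (LinearMap.lTensor H μ (comul (R := k) x)) = μ x • (1 : H) ∧
      TensorProduct.lid k H (LinearMap.rTensor H μ (comul (R := k) x)) = μ x • (1 : H))
    (he : ∀ x : H, x * e = counit (R := k) x • e ∧ e * x = counit (R := k) x • e)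
    (hμe : μ e = 1) :
    ∀ x : H,
      antipode (R := k) x
        = TensorProduct.lid k H
            (LinearMap.rTensor H (μ ∘ₗ LinearMap.mulRight k x) (comul (R := k) e)) ∧
      antipode (R := k) x
        = TensorProduct.rid k H
            (LinearMap.lTensor H (μ ∘ₗ LinearMap.mulRight k x) (comul (R := k) e)) := by
  intro x
  have hslide := comul_mul_tmul_one_eq_comul_mul_one_tmul_antipode (fun z => (he z).2)
  have hslide_antipode := hslide (antipode k x)
  rw [hinv] at hslide_antipode
  constructor
  · rw [rTensor_comp_mulRight_apply, hslide, lid_rTensor_mul_one_tmul, (hμ e).2, hμe, one_smul,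
      one_mul]
  · rw [lTensor_comp_mulRight_apply, ← hslide_antipode, rid_lTensor_mul_tmul_one, (hμ e).1, hμe,
      one_smul, one_mul]

/-- For a finite-dimensional involutory Hopf algebra `H` over a field `k` with a
two-sided integral `μ ∈ H*` and a two-sided cointegral `e ∈ H` such that `μ(e) = 1`, for every
`x ∈ H` we have `S(x) = Σ μ(e₍₁₎·x)·e₍₂₎ = Σ μ(e₍₂₎·x)·e₍₁₎`. -/
theorem antipode_eq_integral_cointegral_formula
    {k H : Type*} [Field k] [Ring H] [HopfAlgebra k H] [FiniteDimensional k H]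
    (hinv : ∀ x : H, antipode (R := k) (antipode (R := k) x) = x)
    (μ : Module.Dual k H) (e : H)
    (hμ : ∀ x : H,
      TensorProduct.rid k H (LinearMap.lTensor H μ (comul (R := k) x)) = μ x • (1 : H) ∧
      TensorProduct.lid k H (LinearMap.rTensor H μ (comul (R := k) x)) = μ x • (1 : H))
    (he : ∀ x : H, x * e = counit (R := k) x • e ∧ e * x = counit (R := k) x • e)
    (hμe : μ e = 1) :
    ∀ x : H,
      antipode (R := k) x
        = TensorProduct.lid k H
            (LinearMap.rTensor H (μ ∘ₗ LinearMap.mulRight k x) (comul (R := k) e)) ∧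
      antipode (R := k) x
        = TensorProduct.rid k H
            (LinearMap.lTensor H (μ ∘ₗ LinearMap.mulRight k x) (comul (R := k) e)) :=
  antipode_eq_integral_cointegral_formula_general hinv μ e hμ he hμe
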